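/- (Polyhedral containment duality.) Let Φ : Matrix (Fin m) (Fin n) ℝ, ψ : Fin m → ℝ, R : Matrix (Fin k) (Fin n) ℝ, r : Fin k → ℝ, and suppose the set {x : Fin n → ℝ | Φ.mulVec x ≤ ψ} is nonempty. Then (for every x, Φ.mulVec x ≤ ψ implies R.mulVec x ≤ r) if and only if there exists a matrix Π : Matrix (Fin m) (Fin k) ℝ with all entries nonnegative such that Φᵀ * Π = Rᵀ and Πᵀ.mulVec ψ ≤ r. -/

import Mathlib

/-!
Sufficiency is weak duality: multiplying `Φ x ≤ ψ` by the nonnegative matrix `Πᵀ` gives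
`R x = Πᵀ Φ x ≤ Πᵀ ψ ≤ r`.

Necessity is the affine Farkas lemma, applied to one row `(R j, r j)` at a time. After
homogenization, `(R j, r j)` has to lie in the cone generated by the rows `(Φ i, ψ i)` and by
`(0, 1)`. Otherwise a functional `(y, τ)` separates it from that cone: if `τ > 0` the point
`-y / τ` is feasible and violates the `j`-th constraint, and if `τ = 0` then `-y` is a recession
direction of the nonempty polyhedron along which `R j ⬝ᵥ x` is unbounded. The separation needs
the finitely generated cone to be closed; by the conic Carathéodory theorem it is a finite union
of images of closed orthants under injective linear maps.
-/

open Matrix Function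

section Caratheodory

variable {𝕜 E ι : Type*} [Field 𝕜] [LinearOrder 𝕜] [IsStrictOrderedRing 𝕜]
  [AddCommGroup E] [Module 𝕜 E] [Fintype ι] {v : ι → E}

lemma exists_nonneg_sum_smul_eq_support_ssubset {c g : ι → 𝕜} (hc : 0 ≤ c)
    (hg : ∑ i, g i • v i = 0) (hgc : support g ⊆ support c) {j : ι} (hj : 0 < g j) :
    ∃ c' : ι → 𝕜, 0 ≤ c' ∧ ∑ i, c' i • v i = ∑ i, c i • v i ∧ support c' ⊂ support c := by
  classical
  -- the longest step along `-g` keeping all coefficients nonnegative kills the coefficient `i₀`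
  obtain ⟨i₀, hi₀, hmin⟩ := (Finset.univ.filter (0 < g ·)).exists_min_image (fun i => c i / g i)
    ⟨j, by simpa using hj⟩
  simp only [Finset.mem_filter, Finset.mem_univ, true_and] at hi₀ hmin
  set t := c i₀ / g i₀
  have ht : 0 ≤ t := div_nonneg (hc i₀) hi₀.le
  refine ⟨c - t • g, fun i => ?_, ?_, ?_⟩
  · simp only [Pi.zero_apply, Pi.sub_apply, Pi.smul_apply, smul_eq_mul]
    rcases lt_or_ge 0 (g i) with hgi | hgi
    · linarith [(le_div_iff₀ hgi).1 (hmin i hgi)]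
    · linarith [show 0 ≤ c i from hc i, mul_nonpos_of_nonneg_of_nonpos ht hgi]
  · simp [sub_smul, Finset.sum_sub_distrib, mul_smul, ← Finset.smul_sum, hg]
  · have hsub : support (c - t • g) ⊆ support c := fun i hi hci => hi <| by
      have : g i = 0 := by_contra fun hgi => hgc hgi hci
      simp [hci, this]
    refine (Set.ssubset_iff_of_subset hsub).2 ⟨i₀, hgc hi₀.ne', ?_⟩
    simp [t, div_mul_cancel₀ _ hi₀.ne']

lemma exists_nonneg_sum_smul_eq_linearIndepOn {c : ι → 𝕜} (hc : 0 ≤ c) :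
    ∃ c' : ι → 𝕜, 0 ≤ c' ∧ ∑ i, c' i • v i = ∑ i, c i • v i ∧
      LinearIndepOn 𝕜 v (support c') := by
  obtain ⟨c', ⟨hc', hsum⟩, hmin⟩ := (InvImage.wf support wellFounded_lt).has_min
    {c' | 0 ≤ c' ∧ ∑ i, c' i • v i = ∑ i, c i • v i} ⟨c, hc, rfl⟩
  refine ⟨c', hc', hsum, linearIndepOn_iff.2 fun l hl hl0 => by_contra fun hne => ?_⟩
  obtain ⟨j, hj⟩ := DFunLike.ne_iff.1 hne
  have hlsum : ∑ i, l i • v i = 0 := by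
    rwa [Finsupp.linearCombination_apply, Finsupp.sum_fintype _ _ (by simp)] at hl0
  have hlc : support l ⊆ support c' := fun i hi =>
    by_contra fun hic => hi ((Finsupp.mem_supported' _ _).1 hl i hic)
  obtain ⟨g, hg, hgc, hj⟩ : ∃ g : ι → 𝕜, ∑ i, g i • v i = 0 ∧ support g ⊆ support c' ∧ 0 < g j := by
    rcases ne_iff_lt_or_gt.1 hj with hlt | hgt
    · exact ⟨-l, by simp [neg_smul, hlsum], by rwa [support_neg], by simpa using hlt⟩
    · exact ⟨l, hlsum, hlc, hgt⟩
  obtain ⟨c'', hc'', hsum', hlt⟩ := exists_nonneg_sum_smul_eq_support_ssubset hc' hg hgc hj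
  exact hmin c'' ⟨hc'', hsum'.trans hsum⟩ hlt

namespace PointedCone

lemma mem_hull_range_iff {x : E} :
    x ∈ hull 𝕜 (Set.range v) ↔ ∃ c : ι → 𝕜, 0 ≤ c ∧ ∑ i, c i • v i = x := by
  rw [Submodule.mem_span_range_iff_exists_fun]
  constructor
  · rintro ⟨c, rfl⟩
    exact ⟨fun i => c i, fun i => (c i).2, rfl⟩
  · rintro ⟨c, hc, rfl⟩
    exact ⟨fun i => ⟨c i, hc i⟩, rfl⟩

lemma coe_hull_range_eq_iUnion_linearIndepOn :
    (hull 𝕜 (Set.range v) : Set E) = ⋃ (s : Finset ι) (_ : LinearIndepOn 𝕜 v s),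
      Fintype.linearCombination 𝕜 (fun i : s => v i) '' {c | 0 ≤ c} := by
  classical
  ext x
  simp only [SetLike.mem_coe, Set.mem_iUnion, Set.mem_image, Fintype.linearCombination_apply]
  constructor
  · intro hx
    obtain ⟨c, hc, rfl⟩ := mem_hull_range_iff.1 hx
    obtain ⟨c', hc', hsum, hli⟩ := exists_nonneg_sum_smul_eq_linearIndepOn (v := v) hc
    refine ⟨(support c').toFinset, by simpa using hli, fun i => c' i, fun i => hc' i, ?_⟩
    rw [← hsum, Finset.sum_coe_sort _ (fun i => c' i • v i), Fintype.sum_subset]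
    intro i hi
    simpa using left_ne_zero_of_smul hi
  · rintro ⟨s, -, c, hc, rfl⟩
    exact Submodule.sum_mem _ fun i _ =>
      (hull 𝕜 (Set.range v)).smul_mem (hc i) (subset_hull (Set.mem_range_self (f := v) i))

end PointedCone

end Caratheodory

section Farkas

variable {ι : Type*}

lemma PointedCone.isClosed_hull_range [Fintype ι] {E : Type*} [NormedAddCommGroup E]
    [NormedSpace ℝ E] [FiniteDimensional ℝ E] (v : ι → E) : IsClosed (hull ℝ (Set.range v) : Set E) := by
  rw [coe_hull_range_eq_iUnion_linearIndepOn]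
  refine isClosed_iUnion_of_finite fun s => isClosed_iUnion_of_finite fun hs => ?_
  exact (LinearMap.isClosedEmbedding_of_injective
    (LinearMap.ker_eq_bot.2 hs.fintypeLinearCombination_injective)).isClosedMap _ isClosed_Ici

theorem exists_nonneg_sum_smul_eq_of_forall_nonneg [Fintype ι] {E : Type*} [NormedAddCommGroup E]
    [NormedSpace ℝ E] [FiniteDimensional ℝ E] (v : ι → E) (b : E)
    (h : ∀ f : StrongDual ℝ E, (∀ i, 0 ≤ f (v i)) → 0 ≤ f b) :
    ∃ c : ι → ℝ, 0 ≤ c ∧ ∑ i, c i • v i = b := by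
  let C : ProperCone ℝ E := ⟨PointedCone.hull ℝ (Set.range v), PointedCone.isClosed_hull_range v⟩
  by_contra hb
  obtain ⟨f, hfC, hfb⟩ := C.hyperplane_separation_point (x₀ := b)
    fun hbC => hb (PointedCone.mem_hull_range_iff.1 hbC)
  exact hfb.not_ge (h f fun i => hfC _ (PointedCone.subset_hull (Set.mem_range_self i)))

lemma StrongDual.apply_prod_eq_dotProduct_add {κ : Type*} [Fintype κ] [DecidableEq κ]
    (f : StrongDual ℝ ((κ → ℝ) × ℝ)) (x : κ → ℝ) (t : ℝ) :
    f (x, t) = x ⬝ᵥ (fun k => f (Pi.single k 1, 0)) + t * f (0, 1) := by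
  have : (x, t) = ∑ k, x k • ((Pi.single k 1 : κ → ℝ), (0 : ℝ)) + t • ((0 : κ → ℝ), (1 : ℝ)) := by
    ext <;> simp [Prod.fst_sum, Prod.snd_sum, Finset.sum_apply, Pi.single_apply]
  rw [this, map_add, map_sum]
  simp only [map_smul, smul_eq_mul, dotProduct]

variable {κ : Type*} [Fintype κ] {Φ : Matrix ι κ ℝ} {ψ : ι → ℝ} {a : κ → ℝ} {β : ℝ}

lemma dotProduct_nonpos_of_mulVec_nonpos {x₀ z : κ → ℝ} (hx₀ : Φ *ᵥ x₀ ≤ ψ)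
    (h : ∀ x, Φ *ᵥ x ≤ ψ → a ⬝ᵥ x ≤ β) (hz : Φ *ᵥ z ≤ 0) : a ⬝ᵥ z ≤ 0 := by
  by_contra! hpos
  set s := (β - a ⬝ᵥ x₀ + 1) / (a ⬝ᵥ z)
  have hs : 0 ≤ s := div_nonneg (by linarith [h x₀ hx₀]) hpos.le
  have hfeas : Φ *ᵥ (x₀ + s • z) ≤ ψ := by
    rw [mulVec_add, mulVec_smul]
    intro i
    have := smul_nonpos_of_nonneg_of_nonpos hs (hz i)
    simp only [Pi.add_apply, Pi.smul_apply] at this ⊢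
    linarith [hx₀ i]
  have := h _ hfeas
  rw [dotProduct_add, dotProduct_smul, smul_eq_mul, div_mul_cancel₀ _ hpos.ne'] at this
  linarith

lemma dotProduct_le_mul_of_mulVec_le_smul (hne : ∃ x₀, Φ *ᵥ x₀ ≤ ψ)
    (h : ∀ x, Φ *ᵥ x ≤ ψ → a ⬝ᵥ x ≤ β) {z : κ → ℝ} {τ : ℝ} (hτ : 0 ≤ τ) (hz : Φ *ᵥ z ≤ τ • ψ) :
    a ⬝ᵥ z ≤ β * τ := by
  rcases hτ.eq_or_lt with rfl | hτ
  · obtain ⟨x₀, hx₀⟩ := hne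
    simpa using dotProduct_nonpos_of_mulVec_nonpos hx₀ h (by simpa using hz)
  · have hx : Φ *ᵥ (τ⁻¹ • z) ≤ ψ := by
      rw [mulVec_smul]
      intro i
      have := hz i
      simp only [Pi.smul_apply, smul_eq_mul] at this ⊢
      rw [inv_mul_le_iff₀ hτ]
      linarith
    have := h _ hx
    rw [dotProduct_smul, smul_eq_mul, inv_mul_le_iff₀ hτ] at this
    linarith

theorem exists_nonneg_vecMul_eq_of_forall_le [Fintype ι] (hne : ∃ x₀, Φ *ᵥ x₀ ≤ ψ)
    (h : ∀ x, Φ *ᵥ x ≤ ψ → a ⬝ᵥ x ≤ β) :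
    ∃ c : ι → ℝ, 0 ≤ c ∧ c ᵥ* Φ = a ∧ c ⬝ᵥ ψ ≤ β := by
  classical
  obtain ⟨c, hc, hcb⟩ := exists_nonneg_sum_smul_eq_of_forall_nonneg
    (Option.elim · ((0 : κ → ℝ), (1 : ℝ)) fun i => (Φ i, ψ i)) (a, β) fun f hf => by
      have hτ : 0 ≤ f (0, 1) := hf none
      have hrow : Φ *ᵥ (-fun k => f (Pi.single k 1, 0)) ≤ f (0, 1) • ψ := fun i => by
        have : 0 ≤ f (Φ i, ψ i) := hf (some i)
        rw [StrongDual.apply_prod_eq_dotProduct_add] at this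
        rw [mulVec_neg]
        change -(Φ i ⬝ᵥ _) ≤ f (0, 1) * ψ i
        linarith
      have := dotProduct_le_mul_of_mulVec_le_smul hne h hτ hrow
      rw [dotProduct_neg] at this
      rw [StrongDual.apply_prod_eq_dotProduct_add]
      linarith
  rw [Fintype.sum_option] at hcb
  simp only [Option.elim_none, Option.elim_some, Prod.ext_iff, Prod.fst_add, Prod.snd_add,
    Prod.fst_sum, Prod.snd_sum, Prod.smul_fst, Prod.smul_snd, smul_zero, zero_add, smul_eq_mul,
    mul_one] at hcb
  refine ⟨c ∘ some, fun i => hc (some i), by rw [vecMul_eq_sum]; exact hcb.1, ?_⟩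
  have : 0 ≤ c none := hc none
  simp only [dotProduct, Function.comp_apply]
  linarith [hcb.2]

end Farkas

lemma mulVec_le_of_transpose_mul_eq {α ι κ μ : Type*} [CommSemiring α] [PartialOrder α]
    [IsOrderedRing α] [Fintype ι] [Fintype κ] {Φ : Matrix ι κ α} {ψ : ι → α}
    {R : Matrix μ κ α} {r : μ → α} {P : Matrix ι μ α} (hP : ∀ i j, 0 ≤ P i j)
    (hPR : Φᵀ * P = Rᵀ) (hPψ : Pᵀ *ᵥ ψ ≤ r) {x : κ → α} (hx : Φ *ᵥ x ≤ ψ) : R *ᵥ x ≤ r := by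
  have hR : R = Pᵀ * Φ := by rw [← transpose_transpose R, ← hPR, transpose_mul, transpose_transpose]
  rw [hR, ← mulVec_mulVec]
  exact fun j => (dotProduct_le_dotProduct_of_nonneg_left hx fun i => hP i j).trans (hPψ j)

/-- Polyhedral containment duality (core of Lemma 2 / Theorem 2): for a nonempty
polyhedron `{x | Φ.mulVec x ≤ ψ}`, the containment in `{x | R.mulVec x ≤ r}` holds iff
it is certified by an entrywise-nonnegative dual matrix `Pdual` with `Φᵀ * Pdual = Rᵀ` and
`Pdualᵀ.mulVec ψ ≤ r`. -/
theorem polyhedral_containment_duality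
    (m n k : ℕ) (Φ : Matrix (Fin m) (Fin n) ℝ) (ψ : Fin m → ℝ)
    (R : Matrix (Fin k) (Fin n) ℝ) (r : Fin k → ℝ)
    (hne : {x : Fin n → ℝ | Φ.mulVec x ≤ ψ}.Nonempty) :
    (∀ x : Fin n → ℝ, Φ.mulVec x ≤ ψ → R.mulVec x ≤ r) ↔
      ∃ Pdual : Matrix (Fin m) (Fin k) ℝ,
        (∀ i j, 0 ≤ Pdual i j) ∧ Φᵀ * Pdual = Rᵀ ∧ Pdualᵀ.mulVec ψ ≤ r := by
  refine ⟨fun h => ?_, fun ⟨P, hP, hPR, hPψ⟩ x hx => mulVec_le_of_transpose_mul_eq hP hPR hPψ hx⟩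
  choose c hc hcΦ hcψ using fun j =>
    exists_nonneg_vecMul_eq_of_forall_le (a := R j) (β := r j) hne fun x hx => h x hx j
  refine ⟨(of c)ᵀ, fun i j => hc j i, ?_, hcψ⟩
  rw [← transpose_mul, transpose_inj]
  ext j t
  exact congrFun (hcΦ j) t
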